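/- arXiv:1406.5666 — 6 statements merged into one kernel-verified Lean document; each statement's English description precedes it below -/
import Mathlib

section
/- Let d ≥ 1 and let A and B be d×d real matrices. Then there exists r ∈ [0,1] such that det A − det B = cof(rA + (1−r)B) : (A − B), where cof denotes the cofactor matrix and : the Frobenius inner product. -/
open Matrix

/-- The cofactor matrix of a square matrix: the transpose of the adjugate. -/
noncomputable def cof {d : ℕ} (A : Matrix (Fin d) (Fin d) ℝ) : Matrix (Fin d) (Fin d) ℝ :=
  (Matrix.adjugate A)ᵀ

/-- The Frobenius inner product of two matrices. -/
def frobInner {d : ℕ} (A B : Matrix (Fin d) (Fin d) ℝ) : ℝ :=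
  ∑ i, ∑ j, A i j * B i j

/-!
Jacobi's formula: the determinant is multilinear in the rows, so its derivative at `M` in the
direction `C` is `∑ i, det (M with row i replaced by C i) = trace (C * adjugate M)`.
Along the segment `t ↦ B + t • (A - B)` the mean value theorem then gives a point `r ∈ (0, 1)`
where this derivative equals `det A - det B`, and `trace ((A - B) * adjugate M)` is the
Frobenius product of `cof M` with `A - B`.
-/

namespace Matrix

theorem det_updateRow_eq_sum_mul_adjugate {R n : Type*} [CommRing R] [Fintype n] [DecidableEq n]
    (M : Matrix n n R) (i : n) (v : n → R) :
    (M.updateRow i v).det = ∑ j, v j * adjugate M j i := by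
  rw [← cramer_transpose_apply, cramer_eq_adjugate_mulVec, ← adjugate_transpose]
  simp only [mulVec, dotProduct, transpose_apply, mul_comm]

section Jacobi

variable {𝕜 n : Type*} [NontriviallyNormedField 𝕜] [Fintype n] [DecidableEq n]

variable (𝕜 n) in
noncomputable def detRowContinuousMultilinear :
    ContinuousMultilinearMap 𝕜 (fun _ : n => n → 𝕜) 𝕜 :=
  { (detRowAlternating : (n → 𝕜) [⋀^n]→ₗ[𝕜] 𝕜).toMultilinearMap with
    cont := (continuous_id (X := Matrix n n 𝕜)).matrix_det }

theorem linearDeriv_detRowContinuousMultilinear (M C : Matrix n n 𝕜) :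
    (detRowContinuousMultilinear 𝕜 n).linearDeriv M C = trace (C * adjugate M) :=
  (ContinuousMultilinearMap.linearDeriv_apply _ _ _).trans <|
    Finset.sum_congr rfl fun i _ => det_updateRow_eq_sum_mul_adjugate M i (C i)

theorem hasDerivAt_det_add_smul (B C : Matrix n n 𝕜) (t : 𝕜) :
    HasDerivAt (fun s : 𝕜 => (B + s • C).det) (trace (C * adjugate (B + t • C))) t := by
  -- `Matrix n n 𝕜` carries no norm instance, so the line is differentiated in `n → n → 𝕜`.
  have hline : HasDerivAt (F := n → n → 𝕜) (fun s => B + s • C) C t :=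
    (((hasDerivAt_id t).smul_const (F := n → n → 𝕜) C).const_add (F := n → n → 𝕜) B).congr_deriv
      (one_smul 𝕜 C)
  rw [← linearDeriv_detRowContinuousMultilinear]
  exact ((detRowContinuousMultilinear 𝕜 n).hasFDerivAt _).comp_hasDerivAt t hline

end Jacobi

end Matrix

theorem frobInner_eq_trace_mul_transpose {d : ℕ} (A B : Matrix (Fin d) (Fin d) ℝ) :
    frobInner A B = trace (B * Aᵀ) := by
  simp only [frobInner, trace, diag, mul_apply, transpose_apply, mul_comm]

theorem stmt0_general (d : ℕ) (A B : Matrix (Fin d) (Fin d) ℝ) :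
    ∃ r ∈ Set.Icc (0 : ℝ) 1,
      A.det - B.det = frobInner (cof (r • A + (1 - r) • B)) (A - B) := by
  have hderiv := hasDerivAt_det_add_smul B (A - B)
  obtain ⟨r, ⟨hr0, hr1⟩, hslope⟩ := exists_hasDerivAt_eq_slope _ _ zero_lt_one
    (fun t _ => (hderiv t).continuousAt.continuousWithinAt) (fun t _ => hderiv t)
  have hsegment : B + r • (A - B) = r • A + (1 - r) • B := by
    rw [smul_sub, sub_smul, one_smul]; abel
  refine ⟨r, ⟨hr0.le, hr1.le⟩, ?_⟩
  rw [frobInner_eq_trace_mul_transpose, cof, transpose_transpose, ← hsegment, hslope]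
  simp

theorem stmt0 (d : ℕ) (hd : 1 ≤ d) (A B : Matrix (Fin d) (Fin d) ℝ) :
    ∃ r ∈ Set.Icc (0 : ℝ) 1,
      A.det - B.det = frobInner (cof (r • A + (1 - r) • B)) (A - B) :=
  stmt0_general d A B
end

section
/- Let Ω be a bounded open convex subset of ℝ^d, let M ≥ 0, and let (u_j)_{j∈ℕ} be a sequence of convex functions u_j : Ω → ℝ with |u_j(x)| ≤ M for all j and all x ∈ Ω. Then there exist a convex function u : Ω → ℝ and a strictly increasing sequence of indices (j_l) such that u_{j_l} converges to u pointwise on Ω, and the convergence is uniform on every compact subset of Ω. -/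
open Filter Topology Metric

/-! A convex function bounded by `M` on a ball of radius `r` is `4M/r`-Lipschitz on the concentric
ball of radius `r/2`, so the sequence is equicontinuous on `Ω`. By compactness of a countable
product of copies of `[-M, M]`, a subsequence converges on a countable dense subset of `Ω`;
equicontinuity makes it Cauchy at every point of `Ω` and, by Ascoli, turns
pointwise convergence into uniform convergence on compact sets. Convexity passes to pointwise
limits. -/

theorem ConvexOn.of_tendsto {E ι : Type*} [AddCommMonoid E] [Module ℝ E] {s : Set E}
    {ℱ : Filter ι} [ℱ.NeBot] {F : ι → E → ℝ} {f : E → ℝ} (hF : ∀ i, ConvexOn ℝ s (F i))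
    (hlim : ∀ x ∈ s, Tendsto (F · x) ℱ (𝓝 (f x))) : ConvexOn ℝ s f := by
  obtain ⟨i⟩ : Nonempty ι := ℱ.nonempty_of_neBot
  refine ⟨(hF i).1, fun x hx y hy a b ha hb hab => ?_⟩
  exact le_of_tendsto_of_tendsto (hlim _ ((hF i).1 hx hy ha hb hab))
    (((hlim x hx).const_smul a).add ((hlim y hy).const_smul b))
    (Eventually.of_forall fun j => (hF j).2 hx hy ha hb hab)

theorem ConvexOn.equicontinuousOn_of_abs_le {E ι : Type*} [NormedAddCommGroup E]
    [NormedSpace ℝ E] {s : Set E} (hs : IsOpen s) {F : ι → E → ℝ} {M : ℝ}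
    (hF : ∀ i, ConvexOn ℝ s (F i)) (hM : ∀ i, ∀ x ∈ s, |F i x| ≤ M) :
    EquicontinuousOn F s := by
  intro x hx
  obtain ⟨r, hr, hrs⟩ := isOpen_iff.mp hs x hx
  have hlip : ∀ i, LipschitzOnWith (2 * M / (r / 2)).toNNReal (F i) (ball x (r - r / 2)) :=
    fun i => ((hF i).subset hrs (convex_ball x r)).lipschitzOnWith_of_abs_le (half_pos hr)
      fun a ha => hM i a (hrs ha)
  have hball : ball x (r - r / 2) ∈ 𝓝 x := ball_mem_nhds x (by linarith)
  have hat := (LipschitzOnWith.uniformEquicontinuousOn F _ hlip).equicontinuousOn x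
    (mem_of_mem_nhds hball)
  intro U hU
  exact (nhdsWithin_eq_nhds.mpr hball ▸ hat U hU).filter_mono nhdsWithin_le_nhds

theorem exists_strictMono_tendsto_of_countable {X : Type*} {T : Set X} (hT : T.Countable)
    {u : ℕ → X → ℝ} {M : ℝ} (hu : ∀ j, ∀ t ∈ T, |u j t| ≤ M) :
    ∃ φ : ℕ → ℕ, StrictMono φ ∧ ∀ t ∈ T, ∃ L, Tendsto (fun l => u (φ l) t) atTop (𝓝 L) := by
  have := hT.to_subtype
  obtain ⟨L, -, φ, hφ, hlim⟩ := (isCompact_univ_pi fun _ : T => isCompact_Icc).tendsto_subseq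
    (x := fun j (t : T) => u j t) fun j t _ => abs_le.mp (hu j t t.2)
  exact ⟨φ, hφ, fun t ht => ⟨L ⟨t, ht⟩, tendsto_pi_nhds.mp hlim ⟨t, ht⟩⟩⟩

theorem EquicontinuousWithinAt.cauchySeq_of_mem_closure {X α ι : Type*} [TopologicalSpace X]
    [PseudoMetricSpace α] [Nonempty ι] [SemilatticeSup ι] {F : ι → X → α} {S T : Set X} {x : X}
    (hF : EquicontinuousWithinAt F S x) (hTS : T ⊆ S) (hx : x ∈ closure T)
    (hT : ∀ t ∈ T, CauchySeq (F · t)) : CauchySeq (F · x) := by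
  rw [Metric.cauchySeq_iff]
  intro ε hε
  have hnear := (uniformity_basis_dist.equicontinuousWithinAt_iff_right.mp hF) (ε / 3)
    (by positivity)
  have := mem_closure_iff_nhdsWithin_neBot.mp hx
  obtain ⟨t, hnear_t, htT⟩ :=
    ((hnear.filter_mono (nhdsWithin_mono x hTS)).and self_mem_nhdsWithin).exists
  obtain ⟨N, hN⟩ := Metric.cauchySeq_iff.mp (hT t htT) (ε / 3) (by positivity)
  refine ⟨N, fun m hm n hn => ?_⟩
  calc dist (F m x) (F n x) ≤ dist (F m x) (F m t) + dist (F m t) (F n t) + dist (F n t) (F n x) :=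
        dist_triangle4 _ _ _ _
    _ < ε / 3 + ε / 3 + ε / 3 := by
        gcongr
        · exact hnear_t m
        · exact hN m hm n hn
        · rw [dist_comm]; exact hnear_t n
    _ = ε := by ring

theorem EquicontinuousOn.tendstoUniformlyOn_of_tendsto {X α ι : Type*} [TopologicalSpace X]
    [UniformSpace α] {F : ι → X → α} {f : X → α} {K : Set X} {ℱ : Filter ι} (hK : IsCompact K)
    (hF : EquicontinuousOn F K) (hlim : ∀ x ∈ K, Tendsto (F · x) ℱ (𝓝 (f x))) :
    TendstoUniformlyOn F f ℱ K := by
  have := (EquicontinuousOn.tendsto_uniformOnFun_iff_pi' (𝔖 := {K}) (by simpa) (by simpa) ℱ f).mpr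
    (by simpa [tendsto_pi_nhds] using fun x hx => hlim x hx)
  exact UniformOnFun.tendsto_iff_tendstoUniformlyOn.mp this K rfl

theorem stmt10_general (d : ℕ) (Ω : Set (EuclideanSpace ℝ (Fin d)))
    (hΩo : IsOpen Ω)
    (M : ℝ) (u : ℕ → EuclideanSpace ℝ (Fin d) → ℝ)
    (hu : ∀ j, ConvexOn ℝ Ω (u j)) (hbound : ∀ j, ∀ x ∈ Ω, |u j x| ≤ M) :
    ∃ (v : EuclideanSpace ℝ (Fin d) → ℝ) (φ : ℕ → ℕ), StrictMono φ ∧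
      ConvexOn ℝ Ω v ∧
      (∀ x ∈ Ω, Tendsto (fun l => u (φ l) x) atTop (nhds (v x))) ∧
      ∀ K ⊆ Ω, IsCompact K →
        TendstoUniformlyOn (fun l => u (φ l)) v atTop K := by
  obtain ⟨T, hTΩ, hTc, hΩT⟩ :=
    (TopologicalSpace.IsSeparable.of_separableSpace Ω).exists_countable_dense_subset
  obtain ⟨φ, hφ, hlimT⟩ :=
    exists_strictMono_tendsto_of_countable hTc fun j t ht => hbound j t (hTΩ ht)
  have hequi : EquicontinuousOn (fun l => u (φ l)) Ω :=
    (ConvexOn.equicontinuousOn_of_abs_le hΩo hu hbound).comp φ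
  have hlim : ∀ x ∈ Ω, ∃ L, Tendsto (fun l => u (φ l) x) atTop (𝓝 L) := fun x hx =>
    cauchySeq_tendsto_of_complete <| (hequi x hx).cauchySeq_of_mem_closure hTΩ (hΩT hx)
      fun t ht => (hlimT t ht).choose_spec.cauchySeq
  choose! v hv using hlim
  exact ⟨v, φ, hφ, ConvexOn.of_tendsto (fun l => hu (φ l)) hv, hv, fun K hKΩ hK =>
    (hequi.mono hKΩ).tendstoUniformlyOn_of_tendsto hK fun x hx => hv x (hKΩ hx)⟩

theorem stmt10 (d : ℕ) (Ω : Set (EuclideanSpace ℝ (Fin d)))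
    (hΩo : IsOpen Ω) (hΩb : Bornology.IsBounded Ω) (hΩc : Convex ℝ Ω)
    (M : ℝ) (hM : 0 ≤ M) (u : ℕ → EuclideanSpace ℝ (Fin d) → ℝ)
    (hu : ∀ j, ConvexOn ℝ Ω (u j)) (hbound : ∀ j, ∀ x ∈ Ω, |u j x| ≤ M) :
    ∃ (v : EuclideanSpace ℝ (Fin d) → ℝ) (φ : ℕ → ℕ), StrictMono φ ∧
      ConvexOn ℝ Ω v ∧
      (∀ x ∈ Ω, Tendsto (fun l => u (φ l) x) atTop (nhds (v x))) ∧
      ∀ K ⊆ Ω, IsCompact K →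
        TendstoUniformlyOn (fun l => u (φ l)) v atTop K :=
  stmt10_general d Ω hΩo M u hu hbound
end

section
/- Let Ω be an open convex subset of ℝ^d, let v : Ω → ℝ be convex and differentiable at every point of Ω, and let (v_m)_{m∈ℕ} be a sequence of functions v_m : Ω → ℝ, each convex and differentiable at every point of Ω, such that v_m converges pointwise to v on Ω. Then the gradient maps ∇v_m converge to ∇v uniformly on every compact subset of Ω. -/
/-!
Convex functions that converge pointwise on an open set are locally uniformly bounded above (by
the maximum principle on a small simplex around each point) and below (by reflection through the
point), hence locally equi-Lipschitz, so the convergence is locally uniform.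

For the gradients, the gradient inequality for `vₘ` along `h` and for `v` along `-h` gives
`⟪∇vₘ x - ∇v x, h⟫ ≤ (vₘ - v) (x + h) + (v - vₘ) x + (v (x + h) + v (x - h) - 2 v x)`.
Take `h` of norm `r` in the direction of `∇vₘ x - ∇v x`: the first two terms are small by
uniform convergence, and the second difference of `v` is `o(r)` uniformly near each point
because `v` is locally Lipschitz and differentiable.
-/

open Filter Set Metric Topology

lemma tendstoLocallyUniformlyOn_of_lipschitzOnWith {ι α β : Type*} [PseudoMetricSpace α]
    [PseudoMetricSpace β] {F : ι → α → β} {f : α → β} {p : Filter ι} {s : Set α}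
    (hF : ∀ x ∈ s, ∃ K, ∃ t ∈ 𝓝[s] x, ∀ i, LipschitzOnWith K (F i) t) (hf : ContinuousOn f s)
    (hFf : ∀ x ∈ s, Tendsto (F · x) p (𝓝 (f x))) : TendstoLocallyUniformlyOn F f p s := by
  rw [Metric.tendstoLocallyUniformlyOn_iff]
  intro ε hε x hx
  obtain ⟨K, t, ht, hK⟩ := hF x hx
  have hδ : 0 < ε / (3 * (K + 1)) := by positivity
  refine ⟨_, inter_mem (inter_mem ht (mem_nhdsWithin_of_mem_nhds (ball_mem_nhds x hδ)))
    (Metric.tendsto_nhds.1 (hf x hx) (ε / 3) (by positivity)), ?_⟩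
  filter_upwards [Metric.tendsto_nhds.1 (hFf x hx) (ε / 3) (by positivity)] with i hi y hy
  obtain ⟨⟨hyt, hyx⟩, hfy : dist (f y) (f x) < ε / 3⟩ := hy
  have hlip : dist (F i x) (F i y) ≤ ε / 3 := by
    refine ((hK i).dist_le_mul _ (mem_of_mem_nhdsWithin hx ht) _ hyt).trans ?_
    rw [mem_ball', lt_div_iff₀ (by positivity)] at hyx
    nlinarith [dist_nonneg (x := x) (y := y), K.coe_nonneg]
  calc dist (f y) (F i y) ≤ dist (f y) (f x) + dist (f x) (F i x) + dist (F i x) (F i y) :=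
        dist_triangle4 _ _ _ _
    _ < ε / 3 + ε / 3 + ε / 3 := by linarith [dist_comm (f x) (F i x)]
    _ = ε := by ring

section NormedSpace

variable {E : Type*} [NormedAddCommGroup E] [NormedSpace ℝ E]

section Family

variable {ι : Type*} {f : ι → E → ℝ} {s : Set E} {x₀ : E}

lemma exists_eventually_forall_le_of_convexOn [FiniteDimensional ℝ E] (hs : s ∈ 𝓝 x₀)
    (hf : ∀ i, ConvexOn ℝ s (f i)) (hbdd : ∀ y ∈ s, BddAbove (range (f · y))) :
    ∃ M, ∀ᶠ y in 𝓝 x₀, ∀ i, f i y ≤ M := by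
  obtain ⟨b, hx₀b, hbs⟩ := exists_mem_interior_convexHull_affineBasis hs
  have hb : range b ⊆ s := (subset_convexHull ℝ _).trans hbs
  obtain ⟨M, hM⟩ := (finite_range b).bddAbove_biUnion.2 fun z hz => hbdd z (hb hz)
  refine ⟨M, mem_of_superset (isOpen_interior.mem_nhds hx₀b) fun y hy i => ?_⟩
  obtain ⟨z, hz, hyz⟩ := (hf i).exists_ge_of_mem_convexHull hb (interior_subset hy)
  exact hyz.trans (hM (mem_biUnion hz (mem_range_self i)))

lemma eventually_forall_two_mul_sub_le_of_convexOn {a M : ℝ} (hs : s ∈ 𝓝 x₀)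
    (hf : ∀ i, ConvexOn ℝ s (f i)) (hM : ∀ᶠ y in 𝓝 x₀, ∀ i, f i y ≤ M) (ha : ∀ i, a ≤ f i x₀) :
    ∀ᶠ y in 𝓝 x₀, ∀ i, 2 * a - M ≤ f i y := by
  have hrefl : Tendsto (fun y => (2 : ℝ) • x₀ - y) (𝓝 x₀) (𝓝 x₀) :=
    (continuous_const.sub continuous_id).tendsto' x₀ x₀ (by simp [two_smul])
  filter_upwards [hs, hrefl.eventually hs, hrefl.eventually hM] with y hy hy' hyM i
  have hmid : (1 / 2 : ℝ) • y + (1 / 2 : ℝ) • ((2 : ℝ) • x₀ - y) = x₀ := by module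
  have hconv := (hf i).2 hy hy' (by norm_num : (0 : ℝ) ≤ 1 / 2) (by norm_num : (0 : ℝ) ≤ 1 / 2)
    (by norm_num)
  rw [hmid, smul_eq_mul, smul_eq_mul] at hconv
  linarith [ha i, hyM i]

lemma exists_lipschitzOnWith_of_convexOn [FiniteDimensional ℝ E] (hs : s ∈ 𝓝 x₀)
    (hf : ∀ i, ConvexOn ℝ s (f i)) (hup : ∀ y ∈ s, BddAbove (range (f · y)))
    (hlow : BddBelow (range (f · x₀))) : ∃ K, ∃ t ∈ 𝓝 x₀, ∀ i, LipschitzOnWith K (f i) t := by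
  obtain ⟨M, hM⟩ := exists_eventually_forall_le_of_convexOn hs hf hup
  obtain ⟨a, ha⟩ := hlow
  have hge := eventually_forall_two_mul_sub_le_of_convexOn hs hf hM fun i => ha (mem_range_self i)
  obtain ⟨r, hr, hball⟩ := Metric.mem_nhds_iff.1 (inter_mem hs (hM.and hge))
  refine ⟨_, ball x₀ (r - r / 2), ball_mem_nhds _ (by linarith), fun i =>
    ((hf i).subset (hball.trans inter_subset_left) (convex_ball _ _)).lipschitzOnWith_of_abs_le
      (half_pos hr) (M := max M (M - 2 * a)) fun y hy => ?_⟩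
  obtain ⟨-, hyM, hya⟩ := hball (mem_ball.2 hy)
  rw [abs_le]
  constructor <;> linarith [hyM i, hya i, le_max_left M (M - 2 * a), le_max_right M (M - 2 * a)]

end Family

lemma tendstoLocallyUniformlyOn_of_convexOn [FiniteDimensional ℝ E] {s : Set E}
    {f : ℕ → E → ℝ} {g : E → ℝ} (hs : IsOpen s) (hf : ∀ n, ConvexOn ℝ s (f n))
    (hg : ContinuousOn g s) (hfg : ∀ x ∈ s, Tendsto (f · x) atTop (𝓝 (g x))) :
    TendstoLocallyUniformlyOn f g atTop s := by
  refine tendstoLocallyUniformlyOn_of_lipschitzOnWith (fun x hx => ?_) hg hfg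
  obtain ⟨K, t, ht, hK⟩ := exists_lipschitzOnWith_of_convexOn (hs.mem_nhds hx) hf
    (fun y hy => (hfg y hy).bddAbove_range) (hfg x hx).bddBelow_range
  exact ⟨K, t, mem_nhdsWithin_of_mem_nhds ht, hK⟩

def secondDiff (f : E → ℝ) (x h : E) : ℝ := f (x + h) + f (x - h) - 2 * f x

variable {f : E → ℝ}

lemma DifferentiableAt.eventually_secondDiff_le {x : E} (hf : DifferentiableAt ℝ f x) {ε : ℝ}
    (hε : 0 < ε) : ∀ᶠ h in 𝓝 0, secondDiff f x h ≤ ε * ‖h‖ := by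
  have hlo := (hasFDerivAt_iff_isLittleO_nhds_zero.1 hf.hasFDerivAt).def (half_pos hε)
  have hneg : Tendsto (fun h : E => -h) (𝓝 0) (𝓝 0) := by simpa using tendsto_neg (0 : E)
  filter_upwards [hlo, hneg.eventually hlo] with h hfwd hbwd
  rw [Real.norm_eq_abs] at hfwd hbwd
  rw [map_neg, norm_neg, ← sub_eq_add_neg] at hbwd
  rw [secondDiff]
  linarith [(abs_le.1 hfwd).2, (abs_le.1 hbwd).2]

lemma LipschitzOnWith.eventually_secondDiff_le {t : Set E} {K : NNReal} {x₀ : E}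
    (hf : LipschitzOnWith K f t) (ht : t ∈ 𝓝 x₀) (hfx₀ : DifferentiableAt ℝ f x₀) {ε : ℝ}
    (hε : 0 < ε) : ∀ᶠ r in 𝓝[>] 0, ∀ᶠ x in 𝓝 x₀, ∀ h, ‖h‖ ≤ r → secondDiff f x h ≤ ε * r := by
  obtain ⟨δ, hδ, hsd⟩ := Metric.eventually_nhds_iff.1 (hfx₀.eventually_secondDiff_le (half_pos hε))
  obtain ⟨R, hR, hRt⟩ := Metric.mem_nhds_iff.1 ht
  have hmem : ∀ y ∈ ball x₀ (R / 2), ∀ k : E, ‖k‖ < R / 2 → y + k ∈ t := fun y hy k hk =>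
    hRt <| calc dist (y + k) x₀ ≤ dist (y + k) y + dist y x₀ := dist_triangle _ _ _
      _ < R / 2 + R / 2 := by rw [dist_self_add_left]; exact add_lt_add hk hy
      _ = R := add_halves R
  filter_upwards [Ioo_mem_nhdsGT (lt_min hδ (half_pos hR))] with r ⟨hr0, hr⟩
  filter_upwards [ball_mem_nhds x₀ (half_pos hR),
    ball_mem_nhds x₀ (show 0 < ε * r / (8 * (K + 1)) by positivity)] with x hxR hxε h hh
  have hhR : ‖h‖ < R / 2 := hh.trans_lt (hr.trans_le (min_le_right _ _))
  have hx₀ : x₀ ∈ ball x₀ (R / 2) := mem_ball_self (half_pos hR)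
  have lip : ∀ k : E, ‖k‖ < R / 2 → |f (x + k) - f (x₀ + k)| ≤ K * dist x x₀ := fun k hk => by
    simpa [← Real.dist_eq] using hf.dist_le_mul _ (hmem x hxR k hk) _ (hmem x₀ hx₀ k hk)
  have hdist : K * dist x x₀ ≤ ε * r / 8 := by
    rw [mem_ball, lt_div_iff₀ (by positivity)] at hxε
    nlinarith [dist_nonneg (x := x) (y := x₀), K.coe_nonneg]
  have hx₀h : secondDiff f x₀ h ≤ ε / 2 * r := by
    refine (hsd (show dist h 0 < δ by
      rw [dist_zero_right]; exact hh.trans_lt (hr.trans_le (min_le_left _ _)))).trans ?_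
    gcongr
  have lfwd := abs_le.1 (lip h hhR)
  have lbwd := abs_le.1 (lip (-h) (by rwa [norm_neg]))
  have lmid := abs_le.1 (lip 0 (by simpa using half_pos hR))
  simp only [← sub_eq_add_neg, add_zero] at lfwd lbwd lmid
  unfold secondDiff at hx₀h ⊢
  linarith

lemma ConvexOn.apply_sub_le_sub_of_hasFDerivAt {s : Set E} {x y : E} {f' : E →L[ℝ] ℝ}
    (hf : ConvexOn ℝ s f) (hx : x ∈ s) (hy : y ∈ s) (hf' : HasFDerivAt f f' x) :
    f' (y - x) ≤ f y - f x := by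
  have hline : HasDerivAt (f ∘ AffineMap.lineMap (k := ℝ) x y) (f' (y - x)) 0 := by
    refine HasFDerivAt.comp_hasDerivAt (0 : ℝ) ?_ AffineMap.hasDerivAt_lineMap
    simpa using hf'
  have := (hf.comp_affineMap (AffineMap.lineMap (k := ℝ) x y)).le_slope_of_hasDerivAt
    (by simpa using hx) (by simpa using hy) one_pos hline
  simpa [slope] using this

end NormedSpace

section InnerProductSpace

variable {F : Type*} [NormedAddCommGroup F] [InnerProductSpace ℝ F] [CompleteSpace F]

lemma ConvexOn.inner_gradient_sub_le_sub {s : Set F} {f : F → ℝ} {x y : F}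
    (hf : ConvexOn ℝ s f) (hx : x ∈ s) (hy : y ∈ s) (hfx : DifferentiableAt ℝ f x) :
    inner ℝ (gradient f x) (y - x) ≤ f y - f x :=
  hf.apply_sub_le_sub_of_hasFDerivAt hx hy (hasGradientAt_iff_hasFDerivAt.1 hfx.hasGradientAt)

lemma ConvexOn.mul_norm_gradient_sub_le {s : Set F} {u v : F → ℝ} {x : F} {r η σ : ℝ}
    (hu : ConvexOn ℝ s u) (hv : ConvexOn ℝ s v) (hux : DifferentiableAt ℝ u x)
    (hvx : DifferentiableAt ℝ v x) (hr : 0 < r) (hs : closedBall x r ⊆ s)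
    (hη : ∀ y ∈ closedBall x r, |u y - v y| ≤ η) (hσ : ∀ h, ‖h‖ ≤ r → secondDiff v x h ≤ σ) :
    r * ‖gradient u x - gradient v x‖ ≤ 2 * η + σ := by
  set g := gradient u x - gradient v x
  have hx : x ∈ closedBall x r := mem_closedBall_self hr.le
  rcases eq_or_ne g 0 with hg | hg
  · have hσ0 := hσ 0 (by simpa using hr.le)
    simp only [secondDiff, add_zero, sub_zero] at hσ0
    rw [hg, norm_zero, mul_zero]
    linarith [(abs_nonneg _).trans (hη x hx)]
  set h := (r / ‖g‖) • g
  have hh : ‖h‖ = r := by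
    rw [norm_smul, Real.norm_of_nonneg (by positivity), div_mul_cancel₀ _ (norm_ne_zero_iff.2 hg)]
  have hgh : inner ℝ g h = r * ‖g‖ := by
    rw [real_inner_smul_right, real_inner_self_eq_norm_mul_norm]
    field_simp
  have hxh : x + h ∈ closedBall x r := by simp [hh]
  have hxh' : x - h ∈ closedBall x r := by simp [hh]
  have hu' := hu.inner_gradient_sub_le_sub (hs hx) (hs hxh) hux
  have hv' := hv.inner_gradient_sub_le_sub (hs hx) (hs hxh') hvx
  rw [add_sub_cancel_left] at hu'
  rw [sub_sub_cancel_left, inner_neg_right] at hv'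
  have hσh := hσ h hh.le
  rw [secondDiff] at hσh
  rw [← hgh, inner_sub_left]
  linarith [(abs_le.1 (hη _ hxh)).2, (abs_le.1 (hη x hx)).1]

lemma tendstoLocallyUniformlyOn_gradient_of_convexOn [FiniteDimensional ℝ F] {ι : Type*}
    {p : Filter ι} {s : Set F} {f : ι → F → ℝ} {g : F → ℝ} (hs : IsOpen s)
    (hf : ∀ i, ConvexOn ℝ s (f i)) (hg : ConvexOn ℝ s g)
    (hfd : ∀ i, ∀ x ∈ s, DifferentiableAt ℝ (f i) x) (hgd : ∀ x ∈ s, DifferentiableAt ℝ g x)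
    (hfg : TendstoLocallyUniformlyOn f g p s) :
    TendstoLocallyUniformlyOn (fun i => gradient (f i)) (gradient g) p s := by
  rw [Metric.tendstoLocallyUniformlyOn_iff]
  intro ε hε x₀ hx₀
  obtain ⟨K, t, ht, hK⟩ := hg.locallyLipschitzOn hs hx₀
  rw [hs.nhdsWithin_eq hx₀] at ht
  obtain ⟨R, hR, hRs⟩ := nhds_basis_closedBall.mem_iff.1 (hs.mem_nhds hx₀)
  have hunif := (tendstoLocallyUniformlyOn_iff_forall_isCompact hs).1 hfg _ hRs
    (isCompact_closedBall x₀ R)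
  obtain ⟨r, hsd, hr0, hrR⟩ := ((hK.eventually_secondDiff_le ht (hgd x₀ hx₀) (half_pos hε)).and
    (Ioo_mem_nhdsGT (half_pos hR))).exists
  refine ⟨_, mem_nhdsWithin_of_mem_nhds (hsd.and (ball_mem_nhds x₀ (half_pos hR))), ?_⟩
  filter_upwards [Metric.tendstoUniformlyOn_iff.1 hunif (ε * r / 8) (by positivity)]
    with i hi x ⟨hxσ, hxR⟩
  have hball : closedBall x r ⊆ closedBall x₀ R :=
    closedBall_subset_closedBall' (by linarith [mem_ball.1 hxR])
  have hxs : x ∈ s := hRs (hball (mem_closedBall_self hr0.le))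
  have key := (hf i).mul_norm_gradient_sub_le hg (hfd i x hxs) (hgd x hxs) hr0 (hball.trans hRs)
    (fun y hy => by rw [abs_sub_comm, ← Real.dist_eq]; exact (hi y (hball hy)).le) hxσ
  rw [dist_eq_norm, norm_sub_rev]
  exact lt_of_mul_lt_mul_left (key.trans_lt (by linarith [mul_pos hε hr0])) hr0.le

end InnerProductSpace

theorem stmt13_general (d : ℕ) (Ω : Set (EuclideanSpace ℝ (Fin d)))
    (hΩo : IsOpen Ω)
    (v : EuclideanSpace ℝ (Fin d) → ℝ)
    (hv : ConvexOn ℝ Ω v) (hvd : ∀ x ∈ Ω, DifferentiableAt ℝ v x)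
    (vm : ℕ → EuclideanSpace ℝ (Fin d) → ℝ)
    (hvm : ∀ m, ConvexOn ℝ Ω (vm m))
    (hvmd : ∀ m, ∀ x ∈ Ω, DifferentiableAt ℝ (vm m) x)
    (hlim : ∀ x ∈ Ω, Tendsto (fun m => vm m x) atTop (nhds (v x))) :
    ∀ K ⊆ Ω, IsCompact K →
      TendstoUniformlyOn (fun m x => gradient (vm m) x) (fun x => gradient v x)
        atTop K := by
  have hconv := tendstoLocallyUniformlyOn_of_convexOn hΩo hvm (hv.continuousOn hΩo) hlim
  exact (tendstoLocallyUniformlyOn_iff_forall_isCompact hΩo).1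
    (tendstoLocallyUniformlyOn_gradient_of_convexOn hΩo hvm hv hvmd hvd hconv)

theorem stmt13 (d : ℕ) (Ω : Set (EuclideanSpace ℝ (Fin d)))
    (hΩo : IsOpen Ω) (hΩc : Convex ℝ Ω)
    (v : EuclideanSpace ℝ (Fin d) → ℝ)
    (hv : ConvexOn ℝ Ω v) (hvd : ∀ x ∈ Ω, DifferentiableAt ℝ v x)
    (vm : ℕ → EuclideanSpace ℝ (Fin d) → ℝ)
    (hvm : ∀ m, ConvexOn ℝ Ω (vm m))
    (hvmd : ∀ m, ∀ x ∈ Ω, DifferentiableAt ℝ (vm m) x)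
    (hlim : ∀ x ∈ Ω, Tendsto (fun m => vm m x) atTop (nhds (v x))) :
    ∀ K ⊆ Ω, IsCompact K →
      TendstoUniformlyOn (fun m x => gradient (vm m) x) (fun x => gradient v x)
        atTop K :=
  stmt13_general d Ω hΩo v hv hvd vm hvm hvmd hlim
end

section
/- Let d, k ∈ ℕ, let U be a nonempty open subset of ℝ^d, let (p_n)_{n∈ℕ} and p be polynomials in d real variables of total degree at most k, and suppose that for every x ∈ U the values p_n(x) converge to p(x). Then for every monomial exponent α ∈ ℕ^d, the coefficient of x^α in p_n converges to the coefficient of x^α in p. -/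
/-!
A polynomial vanishing on a nonempty open set is zero, so on the finite-dimensional space of
polynomials of total degree at most `k` the evaluations at points of `U` have trivial common
kernel and therefore span the dual space. Taking a coefficient is thus a finite linear combination
of evaluations at points of `U`, and pointwise convergence passes to linear combinations.
-/

open Filter MvPolynomial Topology

namespace MvPolynomial

variable {σ : Type*} [Finite σ]

/-- A nonempty open set contains a box with open, hence infinite, sides. -/
theorem eq_zero_of_eval_eq_zero_on_isOpen {R : Type*} [CommRing R] [IsDomain R]
    [TopologicalSpace R] [T1Space R] [∀ x : R, NeBot (𝓝[≠] x)]
    {U : Set (σ → R)} (hUo : IsOpen U) (hUne : U.Nonempty) {r : MvPolynomial σ R}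
    (h : ∀ x ∈ U, eval x r = 0) : r = 0 := by
  obtain ⟨x₀, hx₀⟩ := hUne
  obtain ⟨s, hs, hsU⟩ := isOpen_pi_iff'.1 hUo x₀ hx₀
  have hinf (i : σ) : (s i).Infinite := infinite_of_mem_nhds (x₀ i) ((hs i).1.mem_nhds (hs i).2)
  exact funext_set s hinf fun x hx ↦ by simpa using h x (hsU hx)

theorem mem_span_eval_of_isOpen {K : Type*} [Field K] [TopologicalSpace K] [T1Space K]
    [∀ x : K, NeBot (𝓝[≠] x)] (V : Submodule K (MvPolynomial σ K)) [FiniteDimensional K V]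
    {U : Set (σ → K)} (hUo : IsOpen U) (hUne : U.Nonempty) (f : Module.Dual K V) :
    f ∈ Submodule.span K (Set.range fun x : U ↦ (aeval x.1).toLinearMap ∘ₗ V.subtype) := by
  refine FiniteDimensional.mem_span_of_iInf_ker_le_ker fun v hv ↦ ?_
  obtain rfl : v = 0 := Subtype.ext <| eq_zero_of_eval_eq_zero_on_isOpen hUo hUne fun x hx ↦ by
    simpa using (Submodule.mem_iInf _).1 hv ⟨x, hx⟩
  exact zero_mem _

end MvPolynomial

theorem Filter.Tendsto.dual_apply_of_mem_span {R M ι : Type*} [CommSemiring R]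
    [TopologicalSpace R] [ContinuousAdd R] [ContinuousMul R] [AddCommMonoid M] [Module R M]
    {l : Filter ι} {v : ι → M} {w : M} {S : Set (Module.Dual R M)}
    (h : ∀ f ∈ S, Tendsto (fun n ↦ f (v n)) l (𝓝 (f w))) {g : Module.Dual R M}
    (hg : g ∈ Submodule.span R S) : Tendsto (fun n ↦ g (v n)) l (𝓝 (g w)) := by
  induction hg using Submodule.span_induction with
  | mem f hf => exact h f hf
  | zero => exact tendsto_const_nhds
  | add f₁ f₂ _ _ h₁ h₂ => simpa using h₁.add h₂
  | smul c f _ hf => simpa using hf.const_mul c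

theorem stmt14 (d k : ℕ) (U : Set (Fin d → ℝ)) (hUo : IsOpen U) (hUne : U.Nonempty)
    (p : ℕ → MvPolynomial (Fin d) ℝ) (q : MvPolynomial (Fin d) ℝ)
    (hdegp : ∀ n, (p n).totalDegree ≤ k) (hdegq : q.totalDegree ≤ k)
    (hlim : ∀ x ∈ U,
      Tendsto (fun n => MvPolynomial.eval x (p n)) atTop (nhds (MvPolynomial.eval x q))) :
    ∀ α : Fin d →₀ ℕ,
      Tendsto (fun n => (p n).coeff α) atTop (nhds (q.coeff α)) := by
  intro α
  let V := restrictTotalDegree (Fin d) ℝ k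
  let pV (n : ℕ) : V := ⟨p n, (mem_restrictTotalDegree _ _ _).2 (hdegp n)⟩
  let qV : V := ⟨q, (mem_restrictTotalDegree _ _ _).2 hdegq⟩
  refine Tendsto.dual_apply_of_mem_span (v := pV) (w := qV) ?_
    (mem_span_eval_of_isOpen V hUo hUne ((lcoeff ℝ α).comp V.subtype))
  rintro _ ⟨x, rfl⟩
  simpa [pV, qV] using hlim x x.2
end

section
/- Let d, k ∈ ℕ, let U be a nonempty open subset of ℝ^d, let (p_n)_{n∈ℕ} and p be polynomials in d real variables of total degree at most k, and suppose that for every x ∈ U the values p_n(x) converge to p(x). Then p_n converges to p uniformly on every compact subset K of ℝ^d, i.e. sup_{x∈K} |p_n(x) − p(x)| → 0 as n → ∞. -/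
/-!
Polynomials of total degree at most `k` form a finite-dimensional space, on which evaluation at
the points of a nonempty open set is injective (identity theorem for analytic functions). In
finite dimension an injective linear map into a Hausdorff vector space is a closed embedding, so
pointwise convergence on `U` forces convergence of the polynomials themselves; evaluation into
`C(ℝ^d, ℝ)` is continuous, and convergence in the compact-open topology is uniform convergence
on compacts.
-/

open Filter Topology

namespace MvPolynomial

section RCLike

variable {𝕜 σ : Type*} [RCLike 𝕜]

theorem eq_zero_of_forall_eval_eq_zero_of_isOpen [Fintype σ] {U : Set (σ → 𝕜)} (hU : IsOpen U)
    (hU' : U.Nonempty) {p : MvPolynomial σ 𝕜} (h : ∀ x ∈ U, eval x p = 0) : p = 0 := by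
  obtain ⟨z, hz⟩ := hU'
  have hp : (eval · p) =ᶠ[𝓝 z] 0 := eventually_of_mem (hU.mem_nhds hz) h
  refine funext fun x => ?_
  simpa using (AnalyticOnNhd.eval_mvPolynomial p).eqOn_zero_of_preconnected_of_eventuallyEq_zero
    isPreconnected_univ (Set.mem_univ z) hp (Set.mem_univ x)

noncomputable def evalOnLinearMap (U : Set (σ → 𝕜)) : MvPolynomial σ 𝕜 →ₗ[𝕜] (U → 𝕜) :=
  LinearMap.pi fun x => (aeval x.1).toLinearMap

@[simp]
theorem evalOnLinearMap_apply (U : Set (σ → 𝕜)) (p : MvPolynomial σ 𝕜) (x : U) :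
    evalOnLinearMap U p x = eval x.1 p := by
  simp [evalOnLinearMap]

theorem evalOnLinearMap_injective [Fintype σ] {U : Set (σ → 𝕜)} (hU : IsOpen U)
    (hU' : U.Nonempty) : Function.Injective (evalOnLinearMap U) := by
  refine (injective_iff_map_eq_zero _).2 fun p hp =>
    eq_zero_of_forall_eval_eq_zero_of_isOpen hU hU' fun x hx => ?_
  simpa using congrFun hp ⟨x, hx⟩

end RCLike

section TopologicalRing

variable {R σ : Type*} [CommRing R] [TopologicalSpace R] [IsTopologicalRing R]

noncomputable def toContinuousMapLinear : MvPolynomial σ R →ₗ[R] C(σ → R, R) where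
  toFun p := ⟨(eval · p), continuous_eval p⟩
  map_add' p q := by ext; simp
  map_smul' c p := by ext; simp

end TopologicalRing

end MvPolynomial

theorem Filter.Tendsto.linearMap_of_injective {𝕜 ι E F G : Type*} [NontriviallyNormedField 𝕜]
    [CompleteSpace 𝕜] [AddCommGroup E] [Module 𝕜 E] [FiniteDimensional 𝕜 E]
    [AddCommGroup F] [Module 𝕜 F] [TopologicalSpace F] [IsTopologicalAddGroup F]
    [ContinuousSMul 𝕜 F] [T2Space F]
    [AddCommGroup G] [Module 𝕜 G] [TopologicalSpace G] [IsTopologicalAddGroup G]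
    [ContinuousSMul 𝕜 G] [T2Space G]
    {f : E →ₗ[𝕜] F} (hf : Function.Injective f) (g : E →ₗ[𝕜] G) {l : Filter ι} {u : ι → E}
    {e : E} (h : Tendsto (fun i => f (u i)) l (𝓝 (f e))) :
    Tendsto (fun i => g (u i)) l (𝓝 (g e)) := by
  -- `E` carries no topology: work in coordinates.
  let φ := (Module.finBasis 𝕜 E).equivFun
  have hf' : IsClosedEmbedding (f ∘ₗ φ.symm.toLinearMap) :=
    LinearMap.isClosedEmbedding_of_injective (LinearMap.ker_eq_bot.2 (hf.comp φ.symm.injective))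
  have hu : Tendsto (fun i => φ (u i)) l (𝓝 (φ e)) :=
    hf'.tendsto_nhds_iff.2 (by simpa [Function.comp_def] using h)
  have hg : Continuous (g ∘ₗ φ.symm.toLinearMap) := LinearMap.continuous_of_finiteDimensional _
  simpa [Function.comp_def] using (hg.tendsto _).comp hu

theorem stmt15 (d k : ℕ) (U : Set (Fin d → ℝ)) (hUo : IsOpen U) (hUne : U.Nonempty)
    (p : ℕ → MvPolynomial (Fin d) ℝ) (q : MvPolynomial (Fin d) ℝ)
    (hdegp : ∀ n, (p n).totalDegree ≤ k) (hdegq : q.totalDegree ≤ k)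
    (hlim : ∀ x ∈ U,
      Tendsto (fun n => MvPolynomial.eval x (p n)) atTop (nhds (MvPolynomial.eval x q))) :
    ∀ K : Set (Fin d → ℝ), IsCompact K →
      TendstoUniformlyOn (fun n x => MvPolynomial.eval x (p n))
        (fun x => MvPolynomial.eval x q) atTop K := by
  let E := MvPolynomial.restrictTotalDegree (Fin d) ℝ k
  let u : ℕ → E := fun n => ⟨p n, (MvPolynomial.mem_restrictTotalDegree _ _ _).2 (hdegp n)⟩
  let e : E := ⟨q, (MvPolynomial.mem_restrictTotalDegree _ _ _).2 hdegq⟩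
  have hpointwise : Tendsto (fun n => MvPolynomial.evalOnLinearMap U (p n)) atTop
      (𝓝 (MvPolynomial.evalOnLinearMap U q)) :=
    tendsto_pi_nhds.2 fun x => by simpa using hlim x x.2
  have hcompactOpen : Tendsto (fun n => MvPolynomial.toContinuousMapLinear (p n)) atTop
      (𝓝 (MvPolynomial.toContinuousMapLinear q)) :=
    hpointwise.linearMap_of_injective (f := MvPolynomial.evalOnLinearMap U ∘ₗ E.subtype) (u := u)
      (e := e) ((MvPolynomial.evalOnLinearMap_injective hUo hUne).comp E.injective_subtype)
      (MvPolynomial.toContinuousMapLinear ∘ₗ E.subtype)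
  exact ContinuousMap.tendsto_iff_forall_isCompact_tendstoUniformlyOn.1 hcompactOpen
end

section
/- Let d, k ∈ ℕ, let U be a nonempty open subset of ℝ^d, let (p_n)_{n∈ℕ} and p be polynomials in d real variables of total degree at most k, and suppose that for every x ∈ U the values p_n(x) converge to p(x). Then the gradient maps x ↦ ∇p_n(x) converge to x ↦ ∇p(x) uniformly on every compact subset K of ℝ^d, i.e. sup_{x∈K} ‖∇p_n(x) − ∇p(x)‖ → 0 as n → ∞. -/
/-!
All the polynomials lie in the finite-dimensional space `V` of polynomials of degree at most `k`.
Since a polynomial vanishing on a nonempty open set is zero, evaluation at the points of `U`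
embeds `V` linearly into `U → ℝ`, so pointwise convergence on `U` is convergence in `V`.
The gradient is a linear map from `V` to the continuous vector fields with the compact-open
topology, hence continuous because `V` is finite-dimensional, and convergence in that topology is
uniform convergence on compact sets.
-/

open Filter Topology

theorem LinearMap.tendsto_of_tendsto_of_injective {𝕜 V F G ι : Type*}
    [NontriviallyNormedField 𝕜] [CompleteSpace 𝕜]
    [AddCommGroup V] [Module 𝕜 V] [FiniteDimensional 𝕜 V]
    [AddCommGroup F] [Module 𝕜 F] [TopologicalSpace F] [IsTopologicalAddGroup F]
    [ContinuousSMul 𝕜 F] [T2Space F]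
    [AddCommGroup G] [Module 𝕜 G] [TopologicalSpace G] [IsTopologicalAddGroup G]
    [ContinuousSMul 𝕜 G]
    {f : V →ₗ[𝕜] F} (hf : Function.Injective f) (g : V →ₗ[𝕜] G)
    {u : ι → V} {v : V} {l : Filter ι} (h : Tendsto (fun n => f (u n)) l (𝓝 (f v))) :
    Tendsto (fun n => g (u n)) l (𝓝 (g v)) := by
  let e := LinearEquiv.ofInjective f hf
  have he : Tendsto (fun n => e (u n)) l (𝓝 (e v)) := tendsto_subtype_rng.mpr h
  simpa [Function.comp_def] using
    ((g ∘ₗ e.symm.toLinearMap).continuous_of_finiteDimensional.tendsto _).comp he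

namespace MvPolynomial

variable {σ : Type*}

theorem eq_zero_of_eval_eq_zero_on_isOpen_s16 [Finite σ] {p : MvPolynomial σ ℝ} {U : Set (σ → ℝ)}
    (hU : IsOpen U) (hne : U.Nonempty) (h : ∀ x ∈ U, eval x p = 0) : p = 0 := by
  have := Fintype.ofFinite σ
  obtain ⟨z, hz⟩ := hne
  obtain ⟨ε, hε, hball⟩ := Metric.isOpen_iff.mp hU z hz
  refine funext_set (fun i => Metric.ball (z i) ε) (fun i => ?_) fun x hx => ?_
  · rw [Real.ball_eq_Ioo]
    exact Set.Ioo_infinite (by linarith)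
  · rw [← ball_pi z hε] at hx
    simpa using h x (hball hx)

variable [Fintype σ]

theorem contDiff_eval_ofLp (p : MvPolynomial σ ℝ) {n : WithTop ℕ∞} :
    ContDiff ℝ n fun y : EuclideanSpace ℝ σ => eval (WithLp.equiv 2 (σ → ℝ) y) p :=
  (AnalyticOnNhd.eval_continuousLinearMap
    (EuclideanSpace.equiv σ ℝ).toContinuousLinearMap p).contDiff

theorem eq_zero_of_eval_ofLp_eq_zero_on_isOpen {p : MvPolynomial σ ℝ}
    {U : Set (EuclideanSpace ℝ σ)} (hU : IsOpen U) (hne : U.Nonempty)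
    (h : ∀ x ∈ U, eval (WithLp.equiv 2 (σ → ℝ) x) p = 0) : p = 0 :=
  eq_zero_of_eval_eq_zero_on_isOpen_s16 (hU.preimage (PiLp.continuous_toLp 2 _))
    (hne.preimage (WithLp.equiv 2 (σ → ℝ)).symm.surjective) fun _ hx => h _ hx

noncomputable def gradientLinearMap :
    MvPolynomial σ ℝ →ₗ[ℝ] C(EuclideanSpace ℝ σ, EuclideanSpace ℝ σ) where
  toFun p :=
    { toFun := gradient fun y : EuclideanSpace ℝ σ => eval (WithLp.equiv 2 (σ → ℝ) y) p
      continuous_toFun := (InnerProductSpace.toDual ℝ _).symm.continuous.comp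
        ((contDiff_eval_ofLp p).continuous_fderiv one_ne_zero) }
  map_add' p q := by
    ext1 x
    have hp := (contDiff_eval_ofLp p (n := 1)).differentiable one_ne_zero x
    have hq := (contDiff_eval_ofLp q (n := 1)).differentiable one_ne_zero x
    simp only [ContinuousMap.coe_mk, ContinuousMap.add_apply, gradient, map_add (eval _)]
    rw [fderiv_fun_add hp hq, map_add]
    rfl
  map_smul' c p := by
    ext1 x
    have hp := (contDiff_eval_ofLp p (n := 1)).differentiable one_ne_zero x
    simp only [ContinuousMap.coe_mk, ContinuousMap.smul_apply, gradient, smul_eval,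
      RingHom.id_apply]
    rw [fderiv_const_mul hp, map_smul]
    rfl

theorem tendstoLocallyUniformly_gradient_of_tendsto_eval {ι : Type*} {l : Filter ι}
    (V : Submodule ℝ (MvPolynomial σ ℝ)) [FiniteDimensional ℝ V]
    {U : Set (EuclideanSpace ℝ σ)} (hU : IsOpen U) (hne : U.Nonempty)
    {p : ι → MvPolynomial σ ℝ} {q : MvPolynomial σ ℝ} (hp : ∀ n, p n ∈ V) (hq : q ∈ V)
    (hlim : ∀ x ∈ U, Tendsto (fun n => eval (WithLp.equiv 2 (σ → ℝ) x) (p n)) l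
      (𝓝 (eval (WithLp.equiv 2 (σ → ℝ) x) q))) :
    TendstoLocallyUniformly (fun n => gradient fun y : EuclideanSpace ℝ σ =>
        eval (WithLp.equiv 2 (σ → ℝ) y) (p n))
      (gradient fun y : EuclideanSpace ℝ σ => eval (WithLp.equiv 2 (σ → ℝ) y) q) l := by
  let evalOn : V →ₗ[ℝ] U → ℝ :=
    LinearMap.pi fun x : U => (aeval (WithLp.equiv 2 (σ → ℝ) x)).toLinearMap ∘ₗ V.subtype
  have hinj : Function.Injective evalOn := by
    refine (injective_iff_map_eq_zero evalOn).mpr fun r hr => Subtype.ext ?_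
    exact eq_zero_of_eval_ofLp_eq_zero_on_isOpen hU hne fun x hx => congrFun hr ⟨x, hx⟩
  refine ContinuousMap.tendsto_iff_tendstoLocallyUniformly.mp
    (LinearMap.tendsto_of_tendsto_of_injective hinj (gradientLinearMap ∘ₗ V.subtype)
      (u := fun n => ⟨p n, hp n⟩) (v := ⟨q, hq⟩) ?_)
  exact tendsto_pi_nhds.mpr fun x => hlim x x.2

end MvPolynomial

theorem stmt16 (d k : ℕ) (U : Set (EuclideanSpace ℝ (Fin d)))
    (hUo : IsOpen U) (hUne : U.Nonempty)
    (p : ℕ → MvPolynomial (Fin d) ℝ) (q : MvPolynomial (Fin d) ℝ)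
    (hdegp : ∀ n, (p n).totalDegree ≤ k) (hdegq : q.totalDegree ≤ k)
    (hlim : ∀ x ∈ U,
      Tendsto (fun n => MvPolynomial.eval (WithLp.equiv 2 (Fin d → ℝ) x) (p n)) atTop
        (nhds (MvPolynomial.eval (WithLp.equiv 2 (Fin d → ℝ) x) q))) :
    ∀ K : Set (EuclideanSpace ℝ (Fin d)), IsCompact K →
      TendstoUniformlyOn
        (fun n x =>
          gradient (fun y : EuclideanSpace ℝ (Fin d) =>
            MvPolynomial.eval (WithLp.equiv 2 (Fin d → ℝ) y) (p n)) x)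
        (fun x =>
          gradient (fun y : EuclideanSpace ℝ (Fin d) =>
            MvPolynomial.eval (WithLp.equiv 2 (Fin d → ℝ) y) q) x)
        atTop K :=
  tendstoLocallyUniformly_iff_forall_isCompact.mp <|
    MvPolynomial.tendstoLocallyUniformly_gradient_of_tendsto_eval
      (MvPolynomial.restrictTotalDegree (Fin d) ℝ k) hUo hUne
      (fun n => (MvPolynomial.mem_restrictTotalDegree _ _ _).mpr (hdegp n))
      ((MvPolynomial.mem_restrictTotalDegree _ _ _).mpr hdegq) hlim
end
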